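/- arXiv:1405.2573 — 5 statements merged into one kernel-verified Lean document; each statement's English description precedes it below -/
import Mathlib

section
/- Let b > 0. There exist a constant M_b > 0 and constants ρ¹_b, ρ²_b ∈ (0,1), depending only on b, such that for every a ∈ [−b, b] there exist a probability space and a pair of real random variables (U₁, U₂) on it with the following properties: U₁ and U₂ each have the standard Gaussian law N(0,1); ρ¹_b ≤ P(U₂ = U₁ + a) ≤ ρ²_b; P(|U₂ − U₁| ≤ M_b) = 1; and almost surely on the event {U₂ = U₁ + a} one has |U₁| ≤ M_b/2 + b and |U₂| ≤ M_b/2 + b. -/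
/-!
Let `δ = φ(1 + b) / 2`, where `φ` is the standard Gaussian density. Since `φ` decreases in `|x|`,
`φ ≥ 2δ` on `[-(1 + b), 1 + b] ⊇ [0, 1] ∪ [a, a + 1]`, so `N(0,1)` splits as a residual measure
plus `δ` times Lebesgue measure on `[0, 1]` and on `[a, a + 1]`. Transport the piece on `[0, 1]`
to `[a, a + 1]` by the shift `x ↦ x + a`, the piece on `[a, a + 1]` back to `[0, 1]` by the
reflection `x ↦ 1 + a - x`, and couple the residual with itself independently inside each unit
cell `[n, n + 1)`. Both marginals are then `N(0,1)` and every piece moves points by at most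
`1 + b`. Only the shift charges the line `U₂ = U₁ + a`: the residual has no atoms and the
reflection meets the line in one point, so `P(U₂ = U₁ + a) = δ`.
-/

open MeasureTheory ProbabilityTheory Set
open scoped ENNReal NNReal

namespace MeasureTheory.Measure

variable {α : Type*} [MeasurableSpace α]

noncomputable def selfCoupling (ν : Measure α) : Measure (α × α) := (ν univ)⁻¹ • ν.prod ν

lemma inv_measure_univ_smul_smul (ν : Measure α) [IsFiniteMeasure ν] :
    (ν univ)⁻¹ • ν univ • ν = ν := by
  rcases eq_or_ne (ν univ) 0 with h | h
  · simp [measure_univ_eq_zero.mp h]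
  · rw [smul_smul, ENNReal.inv_mul_cancel h (measure_ne_top _ _), one_smul]

lemma fst_selfCoupling (ν : Measure α) [IsFiniteMeasure ν] : (selfCoupling ν).fst = ν := by
  rw [selfCoupling, fst, Measure.map_smul, map_fst_prod, inv_measure_univ_smul_smul]

lemma snd_selfCoupling (ν : Measure α) [IsFiniteMeasure ν] : (selfCoupling ν).snd = ν := by
  rw [selfCoupling, snd, Measure.map_smul, map_snd_prod, inv_measure_univ_smul_smul]

noncomputable def cellCoupling (μ : Measure ℝ) : Measure (ℝ × ℝ) :=
  sum fun n : ℤ => selfCoupling (μ.restrict (Ico n (n + 1)))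

lemma sum_restrict_Ico_intCast (μ : Measure ℝ) :
    sum (fun n : ℤ => μ.restrict (Ico n (n + 1))) = μ := by
  rw [← restrict_iUnion (pairwise_disjoint_Ico_intCast ℝ) fun _ => measurableSet_Ico,
    iUnion_Ico_intCast, restrict_univ]

variable {μ : Measure ℝ}

lemma fst_cellCoupling [IsFiniteMeasure μ] : (cellCoupling μ).fst = μ := by
  simp only [cellCoupling, fst_sum, fst_selfCoupling, sum_restrict_Ico_intCast]

lemma snd_cellCoupling [IsFiniteMeasure μ] : (cellCoupling μ).snd = μ := by
  simp only [cellCoupling, snd_sum, snd_selfCoupling, sum_restrict_Ico_intCast]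

lemma ae_cellCoupling {p : ℝ × ℝ → Prop}
    (h : ∀ n : ℤ, ∀ᵐ q ∂(μ.restrict (Ico n (n + 1))).prod (μ.restrict (Ico n (n + 1))), p q) :
    ∀ᵐ q ∂cellCoupling μ, p q :=
  ae_sum_iff.mpr fun n => smul_absolutelyContinuous.ae_le (h n)

lemma ae_abs_sub_le_one_cellCoupling [SFinite μ] :
    ∀ᵐ q ∂cellCoupling μ, |q.2 - q.1| ≤ 1 := by
  refine ae_cellCoupling fun n => ?_
  rw [prod_restrict]
  refine ae_restrict_of_forall_mem (measurableSet_Ico.prod measurableSet_Ico) ?_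
  rintro q ⟨⟨h₁, h₂⟩, h₃, h₄⟩
  rw [abs_le]
  constructor <;> linarith

lemma ae_ne_cellCoupling [SFinite μ] [NullSingletonClass μ] {f : ℝ → ℝ}
    (hf : Measurable f) : ∀ᵐ q ∂cellCoupling μ, q.2 ≠ f q.1 := by
  refine ae_cellCoupling fun n => ?_
  have hs : MeasurableSet {q : ℝ × ℝ | q.2 ≠ f q.1} :=
    (measurableSet_eq_fun measurable_snd (hf.comp measurable_fst)).compl
  exact (ae_prod_mem_iff_ae_ae_mem hs).mpr (.of_forall fun x => ae_ne _ (f x))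

end MeasureTheory.Measure

namespace ProbabilityTheory

open Measure

lemma gaussianPDFReal_le_of_abs_sub_le {m : ℝ} {v : ℝ≥0} {x y : ℝ} (h : |x - m| ≤ |y - m|) :
    gaussianPDFReal m v y ≤ gaussianPDFReal m v x := by
  have hsq : (x - m) ^ 2 ≤ (y - m) ^ 2 := sq_le_sq.mpr h
  simp only [gaussianPDFReal]
  gcongr

lemma smul_restrict_Icc_le_gaussianReal (m : ℝ) {v : ℝ≥0} (hv : v ≠ 0) (r : ℝ) :
    ENNReal.ofReal (gaussianPDFReal m v (m + r)) • volume.restrict (Icc (m - r) (m + r))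
      ≤ gaussianReal m v := by
  rw [gaussianReal_of_var_ne_zero m hv, ← withDensity_const,
    ← withDensity_indicator measurableSet_Icc]
  refine withDensity_mono (.of_forall fun x => ?_)
  by_cases hx : x ∈ Icc (m - r) (m + r)
  · rw [indicator_of_mem hx, gaussianPDF]
    refine ENNReal.ofReal_le_ofReal (gaussianPDFReal_le_of_abs_sub_le ?_)
    rw [add_sub_cancel_left]
    exact (abs_le.mpr ⟨by linarith [hx.1], by linarith [hx.2]⟩).trans (le_abs_self r)
  · simp [indicator_of_notMem hx]

lemma map_add_const_volume_restrict_Icc (a x y : ℝ) :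
    (volume.restrict (Icc x y)).map (· + a) = volume.restrict (Icc (x + a) (y + a)) := by
  have h := ((measurePreserving_add_right volume a).restrict_preimage_emb
    (measurableEmbedding_addRight a) (Icc (x + a) (y + a))).map_eq
  rwa [preimage_add_const_Icc, add_sub_cancel_right, add_sub_cancel_right] at h

lemma map_const_sub_volume_restrict_Icc (c x y : ℝ) :
    (volume.restrict (Icc x y)).map (c - ·) = volume.restrict (Icc (c - y) (c - x)) := by
  have h := ((measurePreserving_sub_left volume c).restrict_preimage_emb
    (MeasurableEquiv.subLeft c).measurableEmbedding (Icc (c - y) (c - x))).map_eq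
  rwa [preimage_const_sub_Icc, sub_sub_cancel, sub_sub_cancel] at h

noncomputable def shiftMass (b : ℝ) : ℝ := gaussianPDFReal 0 1 (1 + b) / 2

noncomputable def uniformPiece (b c : ℝ) : Measure ℝ :=
  ENNReal.ofReal (shiftMass b) • volume.restrict (Icc c (c + 1))

noncomputable def residualGaussian (b a : ℝ) : Measure ℝ :=
  gaussianReal 0 1 - (uniformPiece b 0 + uniformPiece b a)

noncomputable def shiftCoupling (b a : ℝ) : Measure (ℝ × ℝ) :=
  cellCoupling (residualGaussian b a) + (uniformPiece b 0).map (fun x => (x, x + a))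
    + (uniformPiece b a).map (fun x => (x, 1 + a - x))

variable {a b : ℝ}

lemma shiftMass_pos : 0 < shiftMass b :=
  half_pos (gaussianPDFReal_pos 0 1 _ one_ne_zero)

lemma shiftMass_lt_one : shiftMass b < 1 := by
  have hmax : gaussianPDFReal 0 1 (1 + b) ≤ gaussianPDFReal 0 1 0 :=
    gaussianPDFReal_le_of_abs_sub_le (by simp)
  have hpeak : gaussianPDFReal 0 1 0 ≤ 1 := by
    have h2π : 1 ≤ √(2 * Real.pi) := Real.one_le_sqrt.mpr (by linarith [Real.pi_gt_three])
    simpa [gaussianPDFReal_def] using inv_le_one_of_one_le₀ h2π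
  unfold shiftMass
  linarith

lemma uniformPiece_add_le_gaussianReal (ha : a ∈ Icc (-b) b) :
    uniformPiece b 0 + uniformPiece b a ≤ gaussianReal 0 1 := by
  obtain ⟨ha₁, ha₂⟩ := ha
  calc uniformPiece b 0 + uniformPiece b a
      ≤ ENNReal.ofReal (shiftMass b) • volume.restrict (Icc (0 - (1 + b)) (0 + (1 + b)))
        + ENNReal.ofReal (shiftMass b) • volume.restrict (Icc (0 - (1 + b)) (0 + (1 + b))) := by
        unfold uniformPiece
        gcongr _ • volume.restrict ?_ + _ • volume.restrict ?_ <;>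
          exact Icc_subset_Icc (by linarith) (by linarith)
    _ = ENNReal.ofReal (gaussianPDFReal 0 1 (0 + (1 + b)))
          • volume.restrict (Icc (0 - (1 + b)) (0 + (1 + b))) := by
        rw [← add_smul, ← ENNReal.ofReal_add shiftMass_pos.le shiftMass_pos.le, shiftMass,
          add_halves, zero_add]
    _ ≤ gaussianReal 0 1 := smul_restrict_Icc_le_gaussianReal 0 one_ne_zero _

lemma map_add_const_uniformPiece (a b : ℝ) :
    (uniformPiece b 0).map (· + a) = uniformPiece b a := by
  rw [uniformPiece, Measure.map_smul, map_add_const_volume_restrict_Icc, zero_add, zero_add,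
    add_comm 1 a, uniformPiece]

lemma map_const_sub_uniformPiece (a b : ℝ) :
    (uniformPiece b a).map (1 + a - ·) = uniformPiece b 0 := by
  rw [uniformPiece, Measure.map_smul, map_const_sub_volume_restrict_Icc, uniformPiece]
  congr 3 <;> ring

instance (b a : ℝ) : IsFiniteMeasure (residualGaussian b a) :=
  isFiniteMeasure_of_le _ sub_le

instance (b a : ℝ) : NullSingletonClass (residualGaussian b a) :=
  have := nullSingletonClass_gaussianReal (μ := 0) one_ne_zero
  ⟨fun x => absolutelyContinuous_of_le sub_le (measure_singleton x)⟩

lemma residualGaussian_add (ha : a ∈ Icc (-b) b) :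
    residualGaussian b a + (uniformPiece b 0 + uniformPiece b a) = gaussianReal 0 1 := by
  have hle := uniformPiece_add_le_gaussianReal ha
  have := isFiniteMeasure_of_le _ hle
  exact sub_add_cancel_of_le hle

lemma fst_shiftCoupling (ha : a ∈ Icc (-b) b) : (shiftCoupling b a).fst = gaussianReal 0 1 := by
  rw [shiftCoupling, fst_add, fst_add, fst_cellCoupling, fst_map_prodMk (by fun_prop),
    fst_map_prodMk (by fun_prop), Measure.map_id', Measure.map_id', add_assoc,
    residualGaussian_add ha]

lemma snd_shiftCoupling (ha : a ∈ Icc (-b) b) : (shiftCoupling b a).snd = gaussianReal 0 1 := by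
  rw [shiftCoupling, snd_add, snd_add, snd_cellCoupling, snd_map_prodMk (by fun_prop),
    snd_map_prodMk (by fun_prop), map_add_const_uniformPiece, map_const_sub_uniformPiece,
    add_assoc, add_comm (uniformPiece b a), residualGaussian_add ha]

lemma isProbabilityMeasure_shiftCoupling (ha : a ∈ Icc (-b) b) :
    IsProbabilityMeasure (shiftCoupling b a) :=
  ⟨by rw [← fst_univ, fst_shiftCoupling ha, measure_univ]⟩

lemma shiftCoupling_line :
    shiftCoupling b a {q | q.2 = q.1 + a} = ENNReal.ofReal (shiftMass b) := by
  have hE : MeasurableSet {q : ℝ × ℝ | q.2 = q.1 + a} :=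
    measurableSet_eq_fun measurable_snd (measurable_fst.add_const a)
  have hcell : cellCoupling (residualGaussian b a) {q | q.2 = q.1 + a} = 0 := by
    simpa only [ne_eq, not_not] using ae_iff.mp (ae_ne_cellCoupling (measurable_add_const a))
  have hshift : (fun x => (x, x + a)) ⁻¹' {q : ℝ × ℝ | q.2 = q.1 + a} = univ := by
    ext x; simp
  have hreflect : (fun x => (x, 1 + a - x)) ⁻¹' {q : ℝ × ℝ | q.2 = q.1 + a} = {1 / 2} := by
    ext x
    change 1 + a - x = x + a ↔ x = 1 / 2
    constructor <;> intro h <;> linarith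
  rw [shiftCoupling, Measure.add_apply, Measure.add_apply, hcell, map_apply (by fun_prop) hE,
    map_apply (by fun_prop) hE, hshift, hreflect]
  simp [uniformPiece]

lemma ae_shiftCoupling (ha : a ∈ Icc (-b) b) :
    ∀ᵐ q ∂shiftCoupling b a,
      |q.2 - q.1| ≤ 1 + b ∧ (q.2 = q.1 + a → |q.1| ≤ 1 ∧ |q.2| ≤ 1 + b) := by
  obtain ⟨ha₁, ha₂⟩ := ha
  have hP : MeasurableSet {q : ℝ × ℝ |
      |q.2 - q.1| ≤ 1 + b ∧ (q.2 = q.1 + a → |q.1| ≤ 1 ∧ |q.2| ≤ 1 + b)} := by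
    measurability
  rw [shiftCoupling, ae_add_measure_iff, ae_add_measure_iff, ae_map_iff (by fun_prop) hP,
    ae_map_iff (by fun_prop) hP]
  refine ⟨⟨?_, ?_⟩, ?_⟩
  · filter_upwards [ae_abs_sub_le_one_cellCoupling,
      ae_ne_cellCoupling (measurable_add_const a)] with q hq hne
    exact ⟨by linarith, fun h => absurd h hne⟩
  · refine ae_smul_measure (ae_restrict_of_forall_mem measurableSet_Icc ?_) _
    rintro x ⟨hx₁, hx₂⟩
    simp only [add_sub_cancel_left, abs_le]
    exact ⟨⟨by linarith, by linarith⟩,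
      fun _ => ⟨⟨by linarith, by linarith⟩, by linarith, by linarith⟩⟩
  · refine ae_smul_measure (ae_restrict_of_forall_mem measurableSet_Icc ?_) _
    rintro x ⟨hx₁, hx₂⟩
    simp only [abs_le]
    exact ⟨⟨by linarith, by linarith⟩,
      fun h => ⟨⟨by linarith, by linarith⟩, by linarith, by linarith⟩⟩

end ProbabilityTheory

/-- For every `b > 0` there exist `M_b > 0` and `ρ¹_b, ρ²_b ∈ (0,1)`, depending
only on `b`, such that for every `a ∈ [−b, b]` there is a probability space carrying real random
variables `U₁, U₂`, each with standard Gaussian law `N(0,1)`, with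
`ρ¹_b ≤ P(U₂ = U₁ + a) ≤ ρ²_b`, `P(|U₂ − U₁| ≤ M_b) = 1`, and a.s. on `{U₂ = U₁ + a}` one has
`|U₁| ≤ M_b/2 + b` and `|U₂| ≤ M_b/2 + b`. -/
theorem statement0 (b : ℝ) (hb : 0 < b) :
    ∃ M ρ₁ ρ₂ : ℝ, 0 < M ∧ ρ₁ ∈ Set.Ioo (0 : ℝ) 1 ∧ ρ₂ ∈ Set.Ioo (0 : ℝ) 1 ∧
      ∀ a ∈ Set.Icc (-b) b,
        ∃ (Ω : Type) (_ : MeasurableSpace Ω) (P : Measure Ω) (_ : IsProbabilityMeasure P)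
          (U₁ U₂ : Ω → ℝ),
          Measurable U₁ ∧ Measurable U₂ ∧
          P.map U₁ = gaussianReal 0 1 ∧
          P.map U₂ = gaussianReal 0 1 ∧
          ρ₁ ≤ (P {ω | U₂ ω = U₁ ω + a}).toReal ∧
          (P {ω | U₂ ω = U₁ ω + a}).toReal ≤ ρ₂ ∧
          P {ω | |U₂ ω - U₁ ω| ≤ M} = 1 ∧
          (∀ᵐ ω ∂P, U₂ ω = U₁ ω + a → (|U₁ ω| ≤ M / 2 + b ∧ |U₂ ω| ≤ M / 2 + b)) := by
  have hρ : shiftMass b ∈ Set.Ioo (0 : ℝ) 1 := ⟨shiftMass_pos, shiftMass_lt_one⟩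
  refine ⟨2 + 2 * b, shiftMass b, shiftMass b, by linarith, hρ, hρ, fun a ha => ?_⟩
  have hP := isProbabilityMeasure_shiftCoupling ha
  have hline : (shiftCoupling b a {q | q.2 = q.1 + a}).toReal = shiftMass b := by
    rw [shiftCoupling_line, ENNReal.toReal_ofReal shiftMass_pos.le]
  have hae := ae_shiftCoupling ha
  refine ⟨ℝ × ℝ, inferInstance, shiftCoupling b a, hP, Prod.fst, Prod.snd, measurable_fst,
    measurable_snd, fst_shiftCoupling ha, snd_shiftCoupling ha, hline.ge, hline.le, ?_, ?_⟩
  · exact (ae_iff_prob_eq_one (by fun_prop)).mp (hae.mono fun q hq => by linarith [hq.1])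
  · filter_upwards [hae] with q hq hq_line
    obtain ⟨h₁, h₂⟩ := hq.2 hq_line
    constructor <;> linarith
end

section
/- Let H ∈ (1/2, 1), let a < b < s < t be real numbers, and let w : ℝ → ℝ be a continuous function. Define I(a,b,s,t,w) = ((t−a)^{H−1/2} − (s−a)^{H−1/2})·(w(a) − w(b)) + (H − 1/2)·∫_a^b ((t−r)^{H−3/2} − (s−r)^{H−3/2})·(w(r) − w(b)) dr. Then (1/(t−s))·|I(a,b,s,t,w)| ≤ (t−a)^{H−3/2}·|w(b) − w(a)| + (1/2)·∫_a^b (s−r)^{H−5/2}·|w(r) − w(b)| dr. -/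
/-! The boundary term is handled by the monotonicity of `x ↦ x ^ (H - 3/2)`, which gives
`(t - a) ^ (H - 1/2) - (s - a) ^ (H - 1/2) ≤ (t - s) (t - a) ^ (H - 3/2)`. In the integral, the
tangent line of the convex function `x ↦ x ^ (H - 3/2)` at `s - r` (a Bernoulli inequality with a
nonpositive exponent) bounds the kernel by `(3/2 - H) (t - s) (s - r) ^ (H - 5/2)`, and
`(H - 1/2) (3/2 - H) ≤ 1/4`. -/

open MeasureTheory intervalIntegral

theorem one_add_mul_self_le_rpow_one_add_of_nonpos {s : ℝ} (hs : -1 < s) {p : ℝ}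
    (hp : p ≤ 0) :
    1 + p * s ≤ (1 + s) ^ p := by
  have hu : 0 < 1 + s := by linarith
  -- Bernoulli with the exponent `1 - p ≥ 1` at `(1 + s)⁻¹`,
  -- since `(1 + s) ^ p = (1 + s) * (1 + s)⁻¹ ^ (1 - p)`
  have h := one_add_mul_self_le_rpow_one_add (s := (1 + s)⁻¹ - 1) (by simp [hu.le]) (p := 1 - p)
    (by linarith)
  rw [add_sub_cancel, Real.inv_rpow hu.le, ← Real.rpow_neg hu.le, neg_sub] at h
  calc 1 + p * s = (1 + s) * (1 + (1 - p) * ((1 + s)⁻¹ - 1)) := by field_simp; ring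
    _ ≤ (1 + s) * (1 + s) ^ (p - 1) := by gcongr
    _ = (1 + s) ^ p := by rw [Real.rpow_sub_one hu.ne']; field_simp

theorem rpow_add_mul_rpow_sub_one_le_rpow_of_nonpos {x y p : ℝ} (hx : 0 < x) (hy : 0 < y)
    (hp : p ≤ 0) :
    x ^ p + p * (y - x) * x ^ (p - 1) ≤ y ^ p := by
  have h := one_add_mul_self_le_rpow_one_add_of_nonpos (s := y / x - 1) (by
    have := div_pos hy hx; linarith) hp
  rw [add_sub_cancel, Real.div_rpow hy.le hx.le] at h
  have hxp : 0 < x ^ p := Real.rpow_pos_of_pos hx p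
  rw [Real.rpow_sub_one hx.ne']
  calc x ^ p + p * (y - x) * (x ^ p / x) = x ^ p * (1 + p * (y / x - 1)) := by
        field_simp
    _ ≤ x ^ p * (y ^ p / x ^ p) := by gcongr
    _ = y ^ p := by field_simp

theorem abs_rpow_sub_rpow_le_of_nonpos {x y p : ℝ} (hx : 0 < x) (hxy : x ≤ y) (hp : p ≤ 0) :
    |y ^ p - x ^ p| ≤ -p * (y - x) * x ^ (p - 1) := by
  have hyx : y ^ p ≤ x ^ p := Real.rpow_le_rpow_of_nonpos hx hxy hp
  have := rpow_add_mul_rpow_sub_one_le_rpow_of_nonpos hx (hx.trans_le hxy) hp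
  rw [abs_of_nonpos (by linarith)]
  linarith

theorem abs_rpow_sub_rpow_le {x y α : ℝ} (hy : 0 < y) (hyx : y ≤ x) (hα₀ : 0 ≤ α)
    (hα₁ : α ≤ 1) :
    |x ^ α - y ^ α| ≤ (x - y) * x ^ (α - 1) := by
  have hx : 0 < x := hy.trans_le hyx
  have hmono : y ^ α ≤ x ^ α := Real.rpow_le_rpow hy.le hyx hα₀
  have hanti : x ^ (α - 1) ≤ y ^ (α - 1) := Real.rpow_le_rpow_of_nonpos hy hyx (by linarith)
  rw [abs_of_nonneg (by linarith)]
  calc x ^ α - y ^ α = x * x ^ (α - 1) - y * y ^ (α - 1) := by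
        rw [Real.rpow_sub_one hx.ne', Real.rpow_sub_one hy.ne']; field_simp
    _ ≤ x * x ^ (α - 1) - y * x ^ (α - 1) := by gcongr
    _ = (x - y) * x ^ (α - 1) := by ring

theorem abs_integral_rpow_sub_rpow_mul_le {a b s t p : ℝ} {v : ℝ → ℝ} (hab : a ≤ b)
    (hbs : b < s) (hst : s ≤ t) (hp : p ≤ 0) (hv : IntervalIntegrable v volume a b) :
    |∫ r in a..b, ((t - r) ^ p - (s - r) ^ p) * v r|
      ≤ -p * (t - s) * ∫ r in a..b, (s - r) ^ (p - 1) * |v r| := by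
  have hpos : ∀ {c}, b < c → ∀ r ∈ Set.uIcc a b, 0 < c - r := fun hc r hr => by
    rw [Set.uIcc_of_le hab] at hr; linarith [hr.2]
  have hkernel : ∀ {c}, b < c → ∀ q : ℝ,
      ContinuousOn (fun r => (c - r) ^ q) (Set.uIcc a b) :=
    fun hc q => (continuousOn_const.sub continuousOn_id).rpow_const
      fun r hr => Or.inl (hpos hc r hr).ne'
  have hbt : b < t := hbs.trans_le hst
  calc |∫ r in a..b, ((t - r) ^ p - (s - r) ^ p) * v r|
      ≤ ∫ r in a..b, |((t - r) ^ p - (s - r) ^ p) * v r| := abs_integral_le_integral_abs hab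
    _ ≤ ∫ r in a..b, -p * (t - s) * ((s - r) ^ (p - 1) * |v r|) := by
        refine integral_mono_on hab
          (hv.continuousOn_mul ((hkernel hbt p).sub (hkernel hbs p))).abs
          ((hv.abs.continuousOn_mul (hkernel hbs (p - 1))).const_mul _) fun r hr => ?_
        have hsr := hpos hbs r (Set.uIcc_of_le hab ▸ hr)
        rw [abs_mul, ← mul_assoc]
        have := abs_rpow_sub_rpow_le_of_nonpos hsr (by linarith : s - r ≤ t - r) hp
        rw [show t - r - (s - r) = t - s by ring] at this
        gcongr
    _ = -p * (t - s) * ∫ r in a..b, (s - r) ^ (p - 1) * |v r| := integral_const_mul _ _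

/-- For `H ∈ (1/2,1)`, `a < b < s < t` and a continuous `w : ℝ → ℝ`, the
integration-by-parts expression
`I = ((t−a)^{H−1/2} − (s−a)^{H−1/2})(w a − w b)
      + (H−1/2)∫_a^b ((t−r)^{H−3/2} − (s−r)^{H−3/2})(w r − w b) dr`
satisfies
`(1/(t−s))|I| ≤ (t−a)^{H−3/2}|w b − w a| + (1/2)∫_a^b (s−r)^{H−5/2}|w r − w b| dr`. -/
theorem statement4 (H a b s t : ℝ) (hH : H ∈ Set.Ioo (1/2 : ℝ) 1)
    (hab : a < b) (hbs : b < s) (hst : s < t)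
    (w : ℝ → ℝ) (hw : Continuous w) :
    (1 / (t - s)) *
      |((t - a) ^ (H - 1/2) - (s - a) ^ (H - 1/2)) * (w a - w b)
        + (H - 1/2) * ∫ r in a..b, ((t - r) ^ (H - 3/2) - (s - r) ^ (H - 3/2)) * (w r - w b)|
    ≤ (t - a) ^ (H - 3/2) * |w b - w a|
        + (1/2) * ∫ r in a..b, (s - r) ^ (H - 5/2) * |w r - w b| := by
  obtain ⟨hH₁, hH₂⟩ := hH
  have hts : 0 < t - s := by linarith
  have hboundary := abs_rpow_sub_rpow_le (x := t - a) (y := s - a) (α := H - 1/2)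
    (by linarith) (by linarith) (by linarith) (by linarith)
  rw [show t - a - (s - a) = t - s by ring, show H - 1/2 - 1 = H - 3/2 by ring] at hboundary
  have hintegral := abs_integral_rpow_sub_rpow_mul_le (v := fun r => w r - w b) hab.le hbs
    hst.le (by linarith : H - 3/2 ≤ 0)
    ((by fun_prop : Continuous fun r => w r - w b).intervalIntegrable a b)
  rw [show H - 3/2 - 1 = H - 5/2 by ring] at hintegral
  set J := ∫ r in a..b, ((t - r) ^ (H - 3/2) - (s - r) ^ (H - 3/2)) * (w r - w b)
  set B := ∫ r in a..b, (s - r) ^ (H - 5/2) * |w r - w b|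
  have hB : 0 ≤ B :=
    integral_nonneg hab.le fun r hr => mul_nonneg (Real.rpow_nonneg (by linarith [hr.2]) _)
      (abs_nonneg _)
  have hcoef : (H - 1/2) * -(H - 3/2) ≤ 1/2 := by nlinarith
  rw [one_div, inv_mul_le_iff₀ hts]
  calc _ ≤ |(t - a) ^ (H - 1/2) - (s - a) ^ (H - 1/2)| * |w b - w a|
        + (H - 1/2) * |J| := by
        refine (abs_add_le _ _).trans_eq ?_
        rw [abs_mul, abs_mul, abs_sub_comm (w a), abs_of_pos (by linarith : 0 < H - 1/2)]
    _ ≤ (t - s) * (t - a) ^ (H - 3/2) * |w b - w a|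
        + (H - 1/2) * (-(H - 3/2) * (t - s) * B) := by
        gcongr
    _ ≤ _ := by nlinarith [mul_le_mul_of_nonneg_right hcoef (mul_nonneg hts.le hB)]
end

section
/- Let d ≥ 1, κ > 0, T > 0, and let ρ : [0,T] → ℝ^d be differentiable with ρ(t) ≠ 0 for all t ∈ [0,T], and suppose that for all t ∈ [0,T], d/dt |ρ(t)|² ≤ −2κ·|ρ(t)|^{3/2}, where |·| denotes the Euclidean norm. Then for every t ∈ [0,T] one has |ρ(t)|^{1/2} ≤ |ρ(0)|^{1/2} − (κ/2)·t; in particular t ↦ |ρ(t)| is non-increasing on [0,T] and T ≤ 2·|ρ(0)|^{1/2}/κ. -/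
/-!
Along the flow, `√‖ρ‖` decreases at rate at least `κ / 2`: by the chain rule
`(√n)' = (n²)' / (4 n^{3/2}) ≤ -κ/2` wherever `n = ‖ρ‖ > 0`. Hence `√‖ρ t‖ + (κ/2) t` is
non-increasing, which gives the bound. Monotonicity of `‖ρ‖` follows because `(κ/2) t` is
increasing, and the bound on `T` because `√‖ρ T‖ ≥ 0`.
-/

open Set

theorem rpow_three_div_two_eq_mul_sqrt {x : ℝ} (hx : 0 ≤ x) : x ^ ((3 : ℝ) / 2) = x * √x := by
  rw [show (3 : ℝ) / 2 = 1 + 1 / 2 by norm_num, Real.rpow_add' hx (by norm_num), Real.rpow_one,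
    Real.sqrt_eq_rpow]

theorem div_two_sqrt_le_of_two_mul_le {x x' κ : ℝ} (hx : 0 < x)
    (h : 2 * x * x' ≤ -2 * κ * x ^ ((3 : ℝ) / 2)) : x' / (2 * √x) ≤ -(κ / 2) := by
  have hs : 0 < √x := Real.sqrt_pos.mpr hx
  rw [rpow_three_div_two_eq_mul_sqrt hx.le] at h
  have hx' : x' ≤ -κ * √x := by nlinarith
  rw [div_le_iff₀ (by positivity)]
  linarith

theorem antitoneOn_sqrt_add_of_deriv_sq_le {g : ℝ → ℝ} {a b κ : ℝ}
    (hcont : ContinuousOn g (Icc a b)) (hdiff : DifferentiableOn ℝ g (Ioo a b))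
    (hpos : ∀ t ∈ Ioo a b, 0 < g t)
    (hder : ∀ t ∈ Ioo a b, deriv (fun u => g u ^ 2) t ≤ -2 * κ * g t ^ ((3 : ℝ) / 2)) :
    AntitoneOn (fun t => √(g t) + κ / 2 * t) (Icc a b) := by
  have hg' : ∀ t ∈ Ioo a b, HasDerivAt g (deriv g t) t := fun t ht =>
    (hdiff.differentiableAt (isOpen_Ioo.mem_nhds ht)).hasDerivAt
  refine antitoneOn_of_hasDerivWithinAt_nonpos (convex_Icc a b)
    (hcont.sqrt.add (by fun_prop)) (f' := fun t => deriv g t / (2 * √(g t)) + κ / 2) ?_ ?_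
  all_goals rw [interior_Icc]
  · intro t ht
    have := ((hg' t ht).sqrt (hpos t ht).ne').fun_add ((hasDerivAt_id t).const_mul (κ / 2))
    simpa using this.hasDerivWithinAt
  · intro t ht
    have hsq : deriv (fun u => g u ^ 2) t = 2 * g t * deriv g t := by
      simpa using ((hg' t ht).fun_pow 2).deriv
    have := div_two_sqrt_le_of_two_mul_le (hpos t ht) (hsq ▸ hder t ht)
    linarith

theorem statement7_general (d : ℕ) (κ T : ℝ) (hκ : 0 < κ)
    (ρ : ℝ → EuclideanSpace ℝ (Fin d))
    (hdiff : DifferentiableOn ℝ ρ (Set.Icc 0 T))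
    (hne : ∀ t ∈ Set.Icc (0 : ℝ) T, ρ t ≠ 0)
    (hder : ∀ t ∈ Set.Icc (0 : ℝ) T,
      derivWithin (fun u => ‖ρ u‖ ^ 2) (Set.Icc 0 T) t ≤ -2 * κ * ‖ρ t‖ ^ ((3 : ℝ) / 2)) :
    (∀ t ∈ Set.Icc (0 : ℝ) T, Real.sqrt ‖ρ t‖ ≤ Real.sqrt ‖ρ 0‖ - κ / 2 * t) ∧
    AntitoneOn (fun t => ‖ρ t‖) (Set.Icc 0 T) ∧
    T ≤ 2 * Real.sqrt ‖ρ 0‖ / κ := by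
  have hnorm : DifferentiableOn ℝ (fun t => ‖ρ t‖) (Icc 0 T) := hdiff.norm ℝ hne
  have hanti : AntitoneOn (fun t => √‖ρ t‖ + κ / 2 * t) (Icc 0 T) :=
    antitoneOn_sqrt_add_of_deriv_sq_le hnorm.continuousOn (hnorm.mono Ioo_subset_Icc_self)
      (fun t ht => norm_pos_iff.mpr (hne t (Ioo_subset_Icc_self ht))) fun t ht => by
        rw [← derivWithin_of_mem_nhds (Icc_mem_nhds ht.1 ht.2)]
        exact hder t (Ioo_subset_Icc_self ht)
  have hbound : ∀ t ∈ Icc (0 : ℝ) T, √‖ρ t‖ ≤ √‖ρ 0‖ - κ / 2 * t := fun t ht => by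
    have := hanti ⟨le_rfl, ht.1.trans ht.2⟩ ht ht.1
    simp only [mul_zero, add_zero] at this
    linarith
  refine ⟨hbound, fun s hs t ht hst => ?_, ?_⟩
  · have hsqrt : √‖ρ t‖ ≤ √‖ρ s‖ := by
      have := hanti hs ht hst
      dsimp only at this
      nlinarith
    exact (Real.sqrt_le_sqrt_iff (norm_nonneg _)).mp hsqrt
  · rcases le_total T 0 with hT | hT
    · exact hT.trans (by positivity)
    · rw [le_div_iff₀ hκ]
      nlinarith [hbound T ⟨hT, le_rfl⟩, Real.sqrt_nonneg ‖ρ T‖]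

/-- Let `d ≥ 1`, `κ > 0`, `T > 0`, and let `ρ : [0,T] → ℝ^d` be differentiable
with `ρ t ≠ 0` on `[0,T]`, satisfying `d/dt ‖ρ t‖² ≤ −2κ‖ρ t‖^{3/2}` on `[0,T]`. Then
`‖ρ t‖^{1/2} ≤ ‖ρ 0‖^{1/2} − (κ/2)t` for `t ∈ [0,T]`; in particular `t ↦ ‖ρ t‖` is
non-increasing on `[0,T]` and `T ≤ 2‖ρ 0‖^{1/2}/κ`. -/
theorem statement7 (d : ℕ) (hd : 1 ≤ d) (κ T : ℝ) (hκ : 0 < κ) (hT : 0 < T)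
    (ρ : ℝ → EuclideanSpace ℝ (Fin d))
    (hdiff : DifferentiableOn ℝ ρ (Set.Icc 0 T))
    (hne : ∀ t ∈ Set.Icc (0 : ℝ) T, ρ t ≠ 0)
    (hder : ∀ t ∈ Set.Icc (0 : ℝ) T,
      derivWithin (fun u => ‖ρ u‖ ^ 2) (Set.Icc 0 T) t ≤ -2 * κ * ‖ρ t‖ ^ ((3 : ℝ) / 2)) :
    (∀ t ∈ Set.Icc (0 : ℝ) T, Real.sqrt ‖ρ t‖ ≤ Real.sqrt ‖ρ 0‖ - κ / 2 * t) ∧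
    AntitoneOn (fun t => ‖ρ t‖) (Set.Icc 0 T) ∧
    T ≤ 2 * Real.sqrt ‖ρ 0‖ / κ :=
  statement7_general d κ T hκ ρ hdiff hne hder
end

section
/- Let (X, 𝒜) be a measurable space, μ a probability measure on X, and φ : X → X a measurable bijection with measurable inverse ψ such that the pushforward φ_*μ is absolutely continuous with respect to μ, with density D = d(φ_*μ)/dμ. Let ν be the measure on X with density (1/2)·min(D, 1) with respect to μ, let P₁ be the pushforward of ν under the map w ↦ (ψ(w), w) from X to X × X, let S : X × X → X × X be the swap map S(w₁,w₂) = (w₂,w₁), let P̃₁ = P₁ + S_*P₁, and let Π₁ : X × X → X be the projection onto the first coordinate. Then the pushforward (Π₁)_*P̃₁ satisfies (Π₁)_*P̃₁(A) ≤ μ(A) for every measurable set A ⊆ X. -/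
/-!
Both marginals of `P₁` are dominated by `μ / 2`. The second marginal is `ν ≤ μ / 2` because the
density of `ν` is at most `1 / 2`. The first is `ψ_*ν`, and `ν ≤ (φ_*μ) / 2` because the density
is at most `D / 2` and `D · μ ≤ φ_*μ`; pushing forward by `ψ = φ⁻¹` gives `ψ_*ν ≤ μ / 2`.
The first marginal of `P̃₁` is the sum of the two marginals of `P₁`.
-/

open MeasureTheory

namespace MeasureTheory.Measure

variable {α : Type*} [MeasurableSpace α] {μ : Measure α}

lemma withDensity_const_mul_min_le_smul {c : ENNReal} (hc : c ≠ ⊤) (f g : α → ENNReal) :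
    μ.withDensity (fun w => c * min (f w) (g w)) ≤ c • μ.withDensity g := by
  rw [← withDensity_smul' c g hc]
  refine withDensity_mono (Filter.Eventually.of_forall fun w => ?_)
  simp only [Pi.smul_apply, smul_eq_mul]
  gcongr
  exact min_le_right _ _

lemma withDensity_const_mul_min_one_le_smul {c : ENNReal} (hc : c ≠ ⊤) (f : α → ENNReal) :
    μ.withDensity (fun w => c * min (f w) 1) ≤ c • μ := by
  simpa using withDensity_const_mul_min_le_smul (μ := μ) hc f 1

lemma withDensity_const_mul_min_rnDeriv_le_smul {c : ENNReal} (hc : c ≠ ⊤) (ρ : Measure α)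
    (g : α → ENNReal) :
    μ.withDensity (fun w => c * min (ρ.rnDeriv μ w) (g w)) ≤ c • ρ := by
  calc μ.withDensity (fun w => c * min (ρ.rnDeriv μ w) (g w))
      ≤ c • μ.withDensity (ρ.rnDeriv μ) := by
        simp_rw [min_comm (ρ.rnDeriv μ _)]
        exact withDensity_const_mul_min_le_smul hc g _
    _ ≤ c • ρ := by gcongr; exact withDensity_rnDeriv_le ρ μ

variable {β : Type*} [MeasurableSpace β]

lemma map_le_smul_of_le_smul_map {ν : Measure β} {φ : α → β} {ψ : β → α} (hφ : Measurable φ)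
    (hψ : Measurable ψ) (hlr : Function.LeftInverse ψ φ) {c : ENNReal} (h : ν ≤ c • μ.map φ) :
    ν.map ψ ≤ c • μ := by
  calc ν.map ψ ≤ (c • μ.map φ).map ψ := map_mono h hψ
    _ = c • μ := by rw [Measure.map_smul, map_map hψ hφ, hlr.comp_eq_id, map_id]

end MeasureTheory.Measure

theorem statement8_general {X : Type*} [MeasurableSpace X] (μ : Measure X)
    (φ ψ : X → X) (hφ : Measurable φ) (hψ : Measurable ψ)
    (hlr : Function.LeftInverse ψ φ)
    (D : X → ENNReal) (hD : D = (μ.map φ).rnDeriv μ)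
    (ν : Measure X) (hν : ν = μ.withDensity fun w => (1 / 2 : ENNReal) * min (D w) 1)
    (P₁ : Measure (X × X)) (hP₁ : P₁ = ν.map fun w => (ψ w, w))
    (Pt : Measure (X × X)) (hPt : Pt = P₁ + P₁.map Prod.swap) :
    ∀ A : Set X, MeasurableSet A → (Pt.map Prod.fst) A ≤ μ A := by
  have hhalf : (1 / 2 : ENNReal) ≠ ⊤ := by norm_num
  have hν_le : ν ≤ (1 / 2 : ENNReal) • μ := by
    rw [hν]
    exact Measure.withDensity_const_mul_min_one_le_smul hhalf D
  have hν_le_map : ν ≤ (1 / 2 : ENNReal) • μ.map φ := by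
    rw [hν, hD]
    exact Measure.withDensity_const_mul_min_rnDeriv_le_smul hhalf _ _
  have hmarginal : Pt.map Prod.fst = ν.map ψ + ν := by
    change Pt.fst = _
    rw [hPt, hP₁, Measure.fst_add, Measure.fst_map_swap,
      Measure.fst_map_prodMk (Y := fun w => w) measurable_id, Measure.snd_map_prodMk hψ,
      Measure.map_id']
  have hle : Pt.map Prod.fst ≤ μ :=
    calc Pt.map Prod.fst = ν.map ψ + ν := hmarginal
      _ ≤ (1 / 2 : ENNReal) • μ + (1 / 2 : ENNReal) • μ :=
        add_le_add (Measure.map_le_smul_of_le_smul_map hφ hψ hlr hν_le_map) hν_le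
      _ = μ := by rw [← add_smul, ENNReal.add_halves, one_smul]
  exact fun A _ => hle A

/-- Let `μ` be a probability measure on `X` and `φ : X → X` a measurable bijection
with measurable inverse `ψ` such that `φ_*μ ≪ μ` with density `D`. With
`ν = (1/2)·min(D,1)·μ`, `P₁ = (w ↦ (ψ w, w))_*ν`, `P̃₁ = P₁ + S_*P₁` (`S` the swap map), the
first marginal of `P̃₁` satisfies `(Π₁)_*P̃₁(A) ≤ μ(A)` for every measurable `A`. -/
theorem statement8 {X : Type*} [MeasurableSpace X] (μ : Measure X) [IsProbabilityMeasure μ]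
    (φ ψ : X → X) (hφ : Measurable φ) (hψ : Measurable ψ)
    (hlr : Function.LeftInverse ψ φ) (hrl : Function.RightInverse ψ φ)
    (hac : μ.map φ ≪ μ)
    (D : X → ENNReal) (hD : D = (μ.map φ).rnDeriv μ)
    (ν : Measure X) (hν : ν = μ.withDensity fun w => (1 / 2 : ENNReal) * min (D w) 1)
    (P₁ : Measure (X × X)) (hP₁ : P₁ = ν.map fun w => (ψ w, w))
    (Pt : Measure (X × X)) (hPt : Pt = P₁ + P₁.map Prod.swap) :
    ∀ A : Set X, MeasurableSet A → (Pt.map Prod.fst) A ≤ μ A :=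
  statement8_general μ φ ψ hφ hψ hlr D hD ν hν P₁ hP₁ Pt hPt
end

section
/- Let d ≥ 1 and let h : ℝ^d → ℝ^d be continuously differentiable such that the Jacobian matrix ∇h(x) = (∂_{x_j} h_i(x))_{i,j} is invertible for every x ∈ ℝ^d and such that the map x ↦ (∇h(x))^{−1} is bounded on ℝ^d (in operator norm). Then h is a global C¹-diffeomorphism from ℝ^d to ℝ^d, i.e. h is bijective and its inverse is continuously differentiable. -/
/-!
By the inverse function theorem `h` is a local homeomorphism. If `γ` lifts the segment
`t ↦ h x₀ + t • v` through `h`, then `γ' = (Dh γ)⁻¹ v`, so `‖γ t - x₀‖ ≤ C ‖v‖ t`: partial lifts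
never leave a fixed compact ball, over which the charts of `h` have targets of a uniform size, so
every lift can be extended by a uniform step and every segment lifts completely. Lifting the
segments from `h x₀` gives a right inverse `G` of `h`, continuous by the homotopy lifting property of
separated local homeomorphisms; then `G ∘ h` and `id` are two lifts of `h` agreeing at `x₀`, hence
equal. The inverse is `C¹` by the easy half of the inverse function theorem.
-/

open Set Function Filter Topology Metric unitInterval

section LocalHomeomorph

variable {X Y : Type*} [TopologicalSpace X] [PseudoMetricSpace Y] {f : X → Y}

theorem IsLocalHomeomorph.exists_pos_forall_ball_subset_target (hf : IsLocalHomeomorph f)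
    {K : Set X} (hK : IsCompact K) :
    ∃ δ > 0, ∀ x ∈ K, ∃ φ : OpenPartialHomeomorph X Y,
      x ∈ φ.source ∧ ⇑φ = f ∧ ball (f x) δ ⊆ φ.target := by
  suffices h : ∀ᶠ δ in 𝓝 (0 : ℝ), ∀ x ∈ K, ∃ φ : OpenPartialHomeomorph X Y,
      x ∈ φ.source ∧ ⇑φ = f ∧ ball (f x) δ ⊆ φ.target from
    ((eventually_mem_nhdsWithin (s := Ioi 0)).and (h.filter_mono nhdsWithin_le_nhds)).exists
  refine hK.eventually_forall_of_forall_eventually fun x _ ↦ ?_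
  obtain ⟨φ, hxφ, rfl⟩ := hf x
  obtain ⟨r, hr, hrφ⟩ := Metric.isOpen_iff.1 φ.open_target (φ x) (φ.map_source hxφ)
  have hnear : ∀ᶠ x' in 𝓝 x, x' ∈ φ.source ∧ dist (φ x') (φ x) < r / 2 :=
    (φ.open_source.eventually_mem hxφ).and
      ((φ.continuousAt hxφ).eventually (ball_mem_nhds _ (half_pos hr)))
  filter_upwards [(gt_mem_nhds (half_pos hr)).prod_nhds hnear] with p ⟨hδ, hpφ, hp⟩
  refine ⟨φ, hpφ, rfl, fun y hy ↦ hrφ ?_⟩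
  rw [mem_ball] at hy ⊢
  linarith [dist_triangle y (φ p.2) (φ x)]

end LocalHomeomorph

section SegmentLift

variable {E F : Type*} [NormedAddCommGroup E] [NormedAddCommGroup F] [NormedSpace ℝ F]

structure LiftsSegment (h : E → F) (x₀ : E) (v : F) (T : ℝ) (γ : ℝ → E) : Prop where
  continuousOn : ContinuousOn γ (Icc 0 T)
  apply_zero : γ 0 = x₀
  lifts : ∀ t ∈ Icc 0 T, h (γ t) = h x₀ + t • v

variable {h : E → F} {x₀ : E} {v : F} {T : ℝ} {γ : ℝ → E}

theorem LiftsSegment.extend (hγ : LiftsSegment h x₀ v T γ) (hT : 0 ≤ T)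
    {φ : OpenPartialHomeomorph E F} (hφ : ⇑φ = h) (hγφ : γ T ∈ φ.source) {δ : ℝ}
    (hδ : ball (h (γ T)) δ ⊆ φ.target) {T' : ℝ} (hTT' : T ≤ T') (hT'δ : (T' - T) * ‖v‖ < δ) :
    ∃ γ', LiftsSegment h x₀ v T' γ' := by
  have hmem : ∀ t ∈ Icc T T', h x₀ + t • v ∈ φ.target := fun t ht ↦ hδ <| by
    rw [mem_ball, dist_eq_norm, hγ.lifts T ⟨hT, le_rfl⟩, add_sub_add_left_eq_sub, ← sub_smul,
      norm_smul, Real.norm_of_nonneg (sub_nonneg.2 ht.1)]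
    nlinarith [norm_nonneg v, ht.2]
  have hjoin : γ T = φ.symm (h x₀ + T • v) := by
    rw [← hγ.lifts T ⟨hT, le_rfl⟩, ← hφ, φ.left_inv hγφ]
  refine ⟨fun t ↦ if t ≤ T then γ t else φ.symm (h x₀ + t • v), ⟨?_, ?_, ?_⟩⟩
  · rw [← Icc_union_Icc_eq_Icc hT hTT']
    refine ContinuousOn.union_of_isClosed ?_ ?_ isClosed_Icc isClosed_Icc
    · exact hγ.continuousOn.congr fun t ht ↦ if_pos ht.2
    · refine (φ.continuousOn_symm.comp (by fun_prop) hmem).congr fun t ht ↦ ?_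
      split_ifs with htT
      · rw [le_antisymm htT ht.1, hjoin]; rfl
      · rfl
  · simp [hT, hγ.apply_zero]
  · intro t ht
    split_ifs with htT
    · exact hγ.lifts t ⟨ht.1, htT⟩
    · simpa only [hφ] using φ.right_inv (hmem t ⟨(not_le.1 htT).le, ht.2⟩)

variable [NormedSpace ℝ E]

theorem isLocalHomeomorph_of_hasStrictFDerivAt [CompleteSpace E] {h' : E → E ≃L[ℝ] F}
    (hh : ∀ x, HasStrictFDerivAt h (h' x : E →L[ℝ] F) x) : IsLocalHomeomorph h := fun x ↦
  ⟨(hh x).toOpenPartialHomeomorph h, (hh x).mem_toOpenPartialHomeomorph_source,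
    (hh x).toOpenPartialHomeomorph_coe.symm⟩

theorem LiftsSegment.hasDerivWithinAt [CompleteSpace E] {h' : E → E ≃L[ℝ] F}
    (hh : ∀ x, HasStrictFDerivAt h (h' x : E →L[ℝ] F) x) (hγ : LiftsSegment h x₀ v T γ)
    {t : ℝ} (ht : t ∈ Icc 0 T) :
    HasDerivWithinAt γ ((h' (γ t)).symm v) (Icc 0 T) t := by
  have hinv := hh (γ t)
  set g := hinv.localInverse h _ (γ t)
  have hpath : HasDerivAt (fun s : ℝ ↦ h x₀ + s • v) v t := by
    simpa using ((hasDerivAt_id t).smul_const v).const_add (h x₀)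
  have hg : HasFDerivAt g ((h' (γ t)).symm : F →L[ℝ] E) (h x₀ + t • v) := by
    rw [← hγ.lifts t ht]
    exact hinv.to_localInverse.hasFDerivAt
  have hγg : γ =ᶠ[𝓝[Icc 0 T] t] fun s ↦ g (h x₀ + s • v) := by
    filter_upwards [(hγ.continuousOn t ht).eventually hinv.eventually_left_inverse,
      self_mem_nhdsWithin] with s hs hsT
    rw [← hγ.lifts s hsT]
    exact hs.symm
  exact (hg.comp_hasDerivWithinAt t hpath.hasDerivWithinAt).congr_of_eventuallyEq hγg
    (hγg.self_of_nhdsWithin ht)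

theorem LiftsSegment.norm_sub_le [CompleteSpace E] {h' : E → E ≃L[ℝ] F}
    (hh : ∀ x, HasStrictFDerivAt h (h' x : E →L[ℝ] F) x) {C : ℝ}
    (hC : ∀ x, ‖((h' x).symm : F →L[ℝ] E)‖ ≤ C) (hγ : LiftsSegment h x₀ v T γ)
    {t : ℝ} (ht : t ∈ Icc 0 T) : ‖γ t - x₀‖ ≤ C * ‖v‖ * t := by
  have := norm_image_sub_le_of_norm_deriv_le_segment' (fun s hs ↦ hγ.hasDerivWithinAt hh hs)
    (fun s _ ↦ ((h' (γ s)).symm : F →L[ℝ] E).le_of_opNorm_le (hC _) v) t ht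
  rwa [hγ.apply_zero, sub_zero] at this

theorem exists_liftsSegment [FiniteDimensional ℝ E] {h' : E → E ≃L[ℝ] F}
    (hh : ∀ x, HasStrictFDerivAt h (h' x : E →L[ℝ] F) x) {C : ℝ}
    (hC : ∀ x, ‖((h' x).symm : F →L[ℝ] E)‖ ≤ C) (x₀ : E) (v : F) :
    ∃ γ, LiftsSegment h x₀ v 1 γ := by
  obtain ⟨δ, hδ, hcharts⟩ := (isLocalHomeomorph_of_hasStrictFDerivAt hh
    ).exists_pos_forall_ball_subset_target (isCompact_closedBall x₀ (C * ‖v‖))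
  have hC0 : 0 ≤ C := (norm_nonneg _).trans (hC x₀)
  set η := δ / (‖v‖ + 1)
  have hη : 0 < η := by positivity
  have hηv : η * ‖v‖ < δ := by
    rw [div_mul_eq_mul_div, div_lt_iff₀ (by positivity)]
    nlinarith [norm_nonneg v]
  have hsteps : ∀ n : ℕ, ∃ γ, LiftsSegment h x₀ v (min (n * η) 1) γ := by
    intro n
    induction n with
    | zero =>
      refine ⟨fun _ ↦ x₀, continuousOn_const, rfl, fun t ht ↦ ?_⟩
      simp [le_antisymm (by simpa using ht.2) ht.1]
    | succ n ih =>
      obtain ⟨γ, hγ⟩ := ih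
      set T := min (n * η) 1
      have hT : T ∈ Icc 0 T := ⟨by positivity, le_rfl⟩
      have hγK : γ T ∈ closedBall x₀ (C * ‖v‖) := by
        rw [mem_closedBall, dist_eq_norm]
        calc _ ≤ C * ‖v‖ * T := hγ.norm_sub_le hh hC hT
          _ ≤ C * ‖v‖ := mul_le_of_le_one_right (by positivity) (min_le_right _ _)
      obtain ⟨φ, hγφ, hφ, hball⟩ := hcharts _ hγK
      have hnext : min ((n + 1 : ℕ) * η) 1 ≤ T + η := by
        rw [← min_add_add_right]
        exact min_le_min (by push_cast; linarith) (by linarith)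
      refine hγ.extend hT.1 hφ hγφ hball (min_le_min_right _ ?_) ?_
      · gcongr; simp
      · calc _ ≤ η * ‖v‖ := mul_le_mul_of_nonneg_right (by linarith) (norm_nonneg v)
          _ < δ := hηv
  obtain ⟨n, hn⟩ := exists_nat_ge (1 / η)
  rw [div_le_iff₀ hη] at hn
  simpa [min_eq_right hn] using hsteps n

theorem IsLocalHomeomorph.exists_homeomorph_of_forall_liftsSegment (hh : IsLocalHomeomorph h)
    (x₀ : E) (hlift : ∀ v, ∃ γ, LiftsSegment h x₀ v 1 γ) : ∃ e : E ≃ₜ F, ⇑e = h := by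
  choose Γ hΓ using fun y ↦ hlift (y - h x₀)
  have hsep : IsSeparatedMap h := T2Space.isSeparatedMap h
  have hΓI : ∀ y (t : I), h (Γ y t) = h x₀ + (t : ℝ) • (y - h x₀) :=
    fun y t ↦ (hΓ y).lifts t t.2
  have hcont : Continuous fun p : I × F ↦ Γ p.2 p.1 :=
    hh.continuous_lift hsep ⟨fun p : I × F ↦ h x₀ + (p.1 : ℝ) • (p.2 - h x₀), by fun_prop⟩
      (funext fun p ↦ hΓI p.2 p.1)
      (by simpa only [Icc.coe_zero, (hΓ _).apply_zero] using continuous_const)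
      fun y ↦ (hΓ y).continuousOn.comp_continuous continuous_subtype_val fun t ↦ t.2
  set G := fun y ↦ Γ y 1
  have hG : Continuous G := hcont.comp (Continuous.prodMk_right 1)
  have hright : RightInverse G h := fun y ↦ by simpa using hΓI y 1
  have hGx₀ : G (h x₀) = x₀ := by
    have hconst := hsep.constOn_of_comp hh.isLocallyInjective isPreconnected_Icc
      (hΓ (h x₀)).continuousOn (fun t ht t' ht' ↦ by simp [(hΓ _).lifts t ht, (hΓ _).lifts t' ht'])
      (right_mem_Icc.2 zero_le_one) (left_mem_Icc.2 zero_le_one)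
    rwa [(hΓ _).apply_zero] at hconst
  have hleft : LeftInverse G h := congr_fun <| hsep.eq_of_comp_eq hh.isLocallyInjective
    (hG.comp hh.continuous) continuous_id (funext fun x ↦ hright (h x)) x₀ hGx₀
  exact ⟨⟨⟨h, G, hleft, hright⟩, hh.continuous, hG⟩, rfl⟩

theorem exists_homeomorph_of_hasStrictFDerivAt_of_norm_symm_le [FiniteDimensional ℝ E]
    {h' : E → E ≃L[ℝ] F} (hh : ∀ x, HasStrictFDerivAt h (h' x : E →L[ℝ] F) x) {C : ℝ}
    (hC : ∀ x, ‖((h' x).symm : F →L[ℝ] E)‖ ≤ C) : ∃ e : E ≃ₜ F, ⇑e = h :=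
  (isLocalHomeomorph_of_hasStrictFDerivAt hh).exists_homeomorph_of_forall_liftsSegment 0
    (exists_liftsSegment hh hC 0)

end SegmentLift

theorem exists_homeomorph_contDiff_symm_of_isUnit_fderiv {E : Type*} [NormedAddCommGroup E]
    [NormedSpace ℝ E] [FiniteDimensional ℝ E] {h : E → E}
    (hC1 : ContDiff ℝ 1 h) (hinv : ∀ x, IsUnit (fderiv ℝ h x)) {C : ℝ}
    (hC : ∀ x, ‖Ring.inverse (fderiv ℝ h x)‖ ≤ C) :
    ∃ e : E ≃ₜ E, ⇑e = h ∧ ContDiff ℝ 1 e.symm := by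
  choose u hu using hinv
  set h' := fun x ↦ ContinuousLinearEquiv.ofUnit (u x)
  have hstrict : ∀ x, HasStrictFDerivAt h (h' x : E →L[ℝ] E) x := fun x ↦ by
    convert hC1.contDiffAt.hasStrictFDerivAt one_ne_zero
    exact (hu x).symm ▸ ContinuousLinearMap.ext fun _ ↦ rfl
  have hsymm : ∀ x, ‖((h' x).symm : E →L[ℝ] E)‖ ≤ C := fun x ↦ by
    convert hC x using 2
    rw [← hu x, Ring.inverse_unit]
    rfl
  obtain ⟨e, rfl⟩ := exists_homeomorph_of_hasStrictFDerivAt_of_norm_symm_le hstrict hsymm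
  exact ⟨e, rfl, e.contDiff_symm (fun x ↦ (hstrict x).hasFDerivAt) hC1⟩

theorem statement10_general (d : ℕ)
    (h : EuclideanSpace ℝ (Fin d) → EuclideanSpace ℝ (Fin d))
    (hC1 : ContDiff ℝ 1 h)
    (hinv : ∀ x, IsUnit (fderiv ℝ h x))
    (hbdd : ∃ C : ℝ, ∀ x, ‖Ring.inverse (fderiv ℝ h x)‖ ≤ C) :
    Function.Bijective h ∧
    ∃ g : EuclideanSpace ℝ (Fin d) → EuclideanSpace ℝ (Fin d),
      Function.LeftInverse g h ∧ Function.RightInverse g h ∧ ContDiff ℝ 1 g := by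
  obtain ⟨C, hC⟩ := hbdd
  obtain ⟨e, rfl, he⟩ := exists_homeomorph_contDiff_symm_of_isUnit_fderiv hC1 hinv hC
  exact ⟨e.bijective, e.symm, e.symm_apply_apply, e.apply_symm_apply, he⟩

/-- Hadamard–Lévy consequence: Let `h : ℝ^d → ℝ^d` be `C¹` with everywhere
invertible Jacobian `∇h(x) = fderiv ℝ h x`, such that `x ↦ (∇h(x))⁻¹` is bounded in operator
norm. Then `h` is a global `C¹`-diffeomorphism of `ℝ^d`: it is bijective with a `C¹` inverse. -/
theorem statement10 (d : ℕ) (hd : 1 ≤ d)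
    (h : EuclideanSpace ℝ (Fin d) → EuclideanSpace ℝ (Fin d))
    (hC1 : ContDiff ℝ 1 h)
    (hinv : ∀ x, IsUnit (fderiv ℝ h x))
    (hbdd : ∃ C : ℝ, ∀ x, ‖Ring.inverse (fderiv ℝ h x)‖ ≤ C) :
    Function.Bijective h ∧
    ∃ g : EuclideanSpace ℝ (Fin d) → EuclideanSpace ℝ (Fin d),
      Function.LeftInverse g h ∧ Function.RightInverse g h ∧ ContDiff ℝ 1 g :=
  statement10_general d h hC1 hinv hbdd
end
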